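/- With s(y) := Re(Λ(y)/(1+iy)) - π²N/12 and Λ(y) := N(π²/6 - log(2)²(1+iy)²/2 - Li₂(2^{-(1+iy)})), one has the asymptotic s(y) = N(log(2)² - π²/12)y² + O(y⁴) as y → 0. -/

import Mathlib

open Real Complex

/-- Complex dilogarithm Li₂(w) = Σ_{n≥1} wⁿ/n² (for |w| < 1 the series converges). -/
noncomputable def Li2C (w : ℂ) : ℂ := ∑' n : ℕ, w ^ (n + 1) / ((n : ℂ) + 1) ^ 2

/-- Λ(y) := N(π²/6 - log(2)²(1+iy)²/2 - Li₂(2^{-(1+iy)})). -/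
noncomputable def Lam (N : ℕ) (y : ℝ) : ℂ :=
  (N : ℂ) * ((π : ℂ) ^ 2 / 6 - (Real.log 2 : ℂ) ^ 2 * (1 + (y : ℂ) * Complex.I) ^ 2 / 2 -
    Li2C ((2 : ℂ) ^ (-(1 + (y : ℂ) * Complex.I))))

/-- s(y) := Re(Λ(y)/(1+iy)) - π²N/12. -/
noncomputable def sfun (N : ℕ) (y : ℝ) : ℝ :=
  (Lam N y / (1 + (y : ℂ) * Complex.I)).re - π ^ 2 * N / 12

/-! On the line `u = 1 + iy` one has `s(y) = N · Re (Ψ(u) / u) - π²N/12` with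
`Ψ(u) = π²/6 - log²2 · u²/2 - Li₂(2⁻ᵘ)` holomorphic on `Re u > 0`, so `s` is real analytic at `0`.
Since `Li₂` commutes with complex conjugation, `s` is even, hence its Taylor expansion at `0` has
no odd terms: `s(y) = s(0) + s''(0) y²/2 + O(y⁴)`.

The coefficients come from `Li₂(1/2) = π²/12 - log²2/2`, a case of Euler's reflection formula
`Li₂(x) + Li₂(1-x) = π²/6 - log x · log(1-x)` (the left side minus the right has zero derivative
on `(0, 1)` and tends to `0` as `x → 0⁺`). It gives `Ψ(1) = π²/12`, `Ψ'(1) = 0` and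
`Ψ''(1) = -2 log²2`, whence `s(0) = 0` and `s''(0) = 2N (log²2 - π²/12)`. -/

open Asymptotics Filter Topology Metric ComplexConjugate

section Taylor

open Finset

variable {𝕜 E : Type*} [NontriviallyNormedField 𝕜] [CharZero 𝕜] [NormedAddCommGroup E]
  [NormedSpace 𝕜 E]

theorem AnalyticAt.isBigO_sub_sum_iteratedDeriv [CompleteSpace E] {f : 𝕜 → E}
    (hf : AnalyticAt 𝕜 f 0) (n : ℕ) :
    (fun z => f z - ∑ i ∈ range n, (z ^ i / i.factorial) • iteratedDeriv i f 0) =O[𝓝 0]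
      fun z => z ^ n := by
  obtain ⟨F, hF, hfF⟩ := hf.exists_eventuallyEq_sum_add_pow_mul n
  have hrem : (fun z => z ^ n • F z) =O[𝓝 0] fun z => z ^ n :=
    ((isBigO_refl (fun z : 𝕜 => z ^ n) _).smul (hF.continuousAt.isBigO_one 𝕜)).congr_right
      (by simp)
  exact hrem.congr' (by filter_upwards [hfF] with z hz; rw [hz]; abel) EventuallyEq.rfl

theorem Function.Even.iteratedDeriv_eq_zero {f : 𝕜 → E} (hf : Function.Even f) {n : ℕ}
    (hn : Odd n) : iteratedDeriv n f 0 = 0 := by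
  have h := iteratedDeriv_comp_neg n f 0
  rw [show (fun x => f (-x)) = f from funext hf, neg_zero, hn.neg_one_pow, neg_one_smul] at h
  have h2 : (2 : 𝕜) • iteratedDeriv n f 0 = 0 := by
    rw [two_smul]
    nth_rewrite 2 [h]
    exact add_neg_cancel _
  exact (smul_eq_zero.mp h2).resolve_left two_ne_zero

theorem AnalyticAt.isBigO_sub_quadratic_of_even [CompleteSpace E] {f : 𝕜 → E}
    (hf : AnalyticAt 𝕜 f 0) (heven : Function.Even f) :
    (fun z => f z - f 0 - (z ^ 2 / 2) • iteratedDeriv 2 f 0) =O[𝓝 0] fun z => z ^ 4 := by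
  refine (hf.isBigO_sub_sum_iteratedDeriv 4).congr_left fun z => ?_
  simp [sum_range_succ, heven.iteratedDeriv_eq_zero (n := 1) odd_one,
    heven.iteratedDeriv_eq_zero (n := 3) (by decide), sub_sub]

end Taylor

lemma norm_Li2C_term_le {w : ℂ} (hw : ‖w‖ ≤ 1) (n : ℕ) :
    ‖w ^ (n + 1) / ((n : ℂ) + 1) ^ 2‖ ≤ 1 / ((n : ℝ) + 1) ^ 2 := by
  rw [norm_div, norm_pow, norm_pow, ← Nat.cast_add_one, Complex.norm_natCast, Nat.cast_add_one]
  gcongr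
  exact pow_le_one₀ (norm_nonneg w) hw

lemma summable_one_div_nat_add_one_sq : Summable fun n : ℕ => 1 / ((n : ℝ) + 1) ^ 2 := by
  simpa using (summable_nat_add_iff 1).mpr (Real.summable_one_div_nat_pow.mpr one_lt_two)

lemma continuousOn_Li2C : ContinuousOn Li2C (closedBall 0 1) :=
  continuousOn_tsum (fun n => by fun_prop) summable_one_div_nat_add_one_sq
    fun n w hw => norm_Li2C_term_le (mem_closedBall_zero_iff.mp hw) n

lemma Li2C_zero : Li2C 0 = 0 := by
  simp [Li2C]

lemma Li2C_one : Li2C 1 = π ^ 2 / 6 := by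
  have h := Complex.hasSum_ofReal.mpr ((hasSum_nat_add_iff' 1).mpr hasSum_zeta_two)
  simp only [Finset.range_one, Finset.sum_singleton, Nat.cast_zero, ne_eq, OfNat.ofNat_ne_zero,
    not_false_eq_true, zero_pow, div_zero, sub_zero, Nat.cast_add, Nat.cast_one] at h
  push_cast at h
  simpa [Li2C] using h.tsum_eq

lemma Li2C_conj (w : ℂ) : Li2C (conj w) = conj (Li2C w) := by
  simp [Li2C, Complex.conj_tsum]

lemma Li2C_ofReal_im (x : ℝ) : (Li2C x).im = 0 :=
  Complex.conj_eq_iff_im.mp (by rw [← Li2C_conj, Complex.conj_ofReal])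

lemma hasSum_div_nat_add_one_eq_neg_log {w : ℂ} (hw : ‖w‖ < 1) (hw0 : w ≠ 0) :
    HasSum (fun n : ℕ => w ^ n / ((n : ℂ) + 1)) (-Complex.log (1 - w) / w) := by
  have h := (hasSum_nat_add_iff' 1).mpr (Complex.hasSum_taylorSeries_neg_log hw)
  simp only [Finset.range_one, Finset.sum_singleton, pow_zero, Nat.cast_zero, div_zero, sub_zero,
    Nat.cast_add, Nat.cast_one] at h
  refine (h.div_const w).congr_fun fun n => ?_
  rw [pow_succ]
  field_simp

lemma hasDerivAt_Li2C {w : ℂ} (hw : ‖w‖ < 1) (hw0 : w ≠ 0) :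
    HasDerivAt Li2C (-Complex.log (1 - w) / w) w := by
  obtain ⟨r, hwr, hr1⟩ := exists_between hw
  have hr0 : 0 < r := (norm_nonneg w).trans_lt hwr
  have h := hasDerivAt_tsum_of_isPreconnected
    (g := fun (n : ℕ) (z : ℂ) => z ^ (n + 1) / ((n : ℂ) + 1) ^ 2)
    (g' := fun (n : ℕ) (z : ℂ) => z ^ n / ((n : ℂ) + 1))
    (summable_geometric_of_lt_one hr0.le hr1) isOpen_ball (convex_ball 0 r).isPreconnected
    (fun n z _ => by
      refine ((hasDerivAt_pow (n + 1) z).div_const (((n : ℂ) + 1) ^ 2)).congr_deriv ?_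
      rw [Nat.add_sub_cancel]
      push_cast
      field_simp)
    (fun n z hz => by
      rw [norm_div, norm_pow, ← Nat.cast_add_one, Complex.norm_natCast]
      calc ‖z‖ ^ n / ((n + 1 : ℕ) : ℝ) ≤ ‖z‖ ^ n := div_le_self (by positivity) (by simp)
        _ ≤ r ^ n := pow_le_pow_left₀ (norm_nonneg z) (mem_ball_zero_iff.mp hz).le n)
    (mem_ball_self hr0)
    (.of_norm_bounded summable_one_div_nat_add_one_sq (norm_Li2C_term_le (by simp)))
    (mem_ball_zero_iff.mpr hwr)
  rwa [(hasSum_div_nat_add_one_eq_neg_log hw hw0).tsum_eq] at h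

lemma hasDerivAt_re_Li2C_ofReal {x : ℝ} (hx0 : 0 < x) (hx1 : x < 1) :
    HasDerivAt (fun t : ℝ => (Li2C t).re) (-Real.log (1 - x) / x) x := by
  have h := (hasDerivAt_Li2C (w := x) (by simp [abs_of_pos hx0, hx1])
    (by exact_mod_cast hx0.ne')).real_of_complex
  rwa [← Complex.ofReal_one, ← Complex.ofReal_sub, ← Complex.ofReal_log (by linarith),
    ← Complex.ofReal_neg, ← Complex.ofReal_div, Complex.ofReal_re] at h

lemma tendsto_Li2C_ofReal_nhdsGT_zero : Tendsto (fun t : ℝ => Li2C t) (𝓝[>] 0) (𝓝 0) := by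
  have h := (continuousOn_Li2C.continuousAt (closedBall_mem_nhds 0 one_pos)).tendsto.comp
    (Complex.continuous_ofReal.tendsto 0)
  rw [Li2C_zero] at h
  exact h.mono_left nhdsWithin_le_nhds

lemma tendsto_Li2C_one_sub_nhdsGT_zero :
    Tendsto (fun t : ℝ => Li2C (1 - t : ℝ)) (𝓝[>] 0) (𝓝 (π ^ 2 / 6)) := by
  have hmaps : Tendsto (fun t : ℝ => ((1 - t : ℝ) : ℂ)) (𝓝[>] 0) (𝓝[closedBall 0 1] 1) := by
    refine tendsto_nhdsWithin_iff.mpr ⟨?_, ?_⟩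
    · exact ((Complex.continuous_ofReal.comp (continuous_const.sub continuous_id)).tendsto'
        0 1 (by simp)).mono_left nhdsWithin_le_nhds
    · filter_upwards [Ioo_mem_nhdsGT (zero_lt_one' ℝ)] with t ht
      rw [mem_closedBall_zero_iff, Complex.norm_real, Real.norm_eq_abs, abs_le]
      constructor <;> linarith [ht.1, ht.2]
  have h := (continuousOn_Li2C 1 (by simp)).tendsto.comp hmaps
  rwa [Li2C_one] at h

lemma tendsto_log_mul_log_one_sub_nhdsGT_zero :
    Tendsto (fun t => Real.log t * Real.log (1 - t)) (𝓝[>] 0) (𝓝 0) := by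
  have hlog : (fun t => Real.log (1 - t)) =O[𝓝 0] fun t => t := by
    have h := ((hasDerivAt_id (0 : ℝ)).const_sub 1).log (by norm_num)
    simpa using h.isBigO_sub
  have hmul : Tendsto (fun t => Real.log t * t) (𝓝[>] 0) (𝓝 0) := by
    simpa [mul_comm] using (Real.continuous_mul_log.tendsto 0).mono_left nhdsWithin_le_nhds
  exact ((isBigO_refl Real.log _).mul (hlog.mono nhdsWithin_le_nhds)).trans_tendsto hmul

theorem re_Li2C_add_re_Li2C_one_sub {x : ℝ} (hx0 : 0 < x) (hx1 : x < 1) :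
    (Li2C x).re + (Li2C (1 - x : ℝ)).re + Real.log x * Real.log (1 - x) = π ^ 2 / 6 := by
  set R := fun x : ℝ => (Li2C x).re + (Li2C (1 - x : ℝ)).re + Real.log x * Real.log (1 - x)
  have hderiv : ∀ t ∈ Set.Ioo (0 : ℝ) 1, HasDerivAt R 0 t := by
    rintro t ⟨ht0, ht1⟩
    have h1 := hasDerivAt_re_Li2C_ofReal ht0 ht1
    have h2 := (hasDerivAt_re_Li2C_ofReal (x := 1 - t) (by linarith) (by linarith)).comp t
      ((hasDerivAt_id t).const_sub 1)
    have h3 := (Real.hasDerivAt_log ht0.ne').mul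
      (((hasDerivAt_id t).const_sub 1).log (by simp; linarith))
    refine ((h1.add h2).add h3).congr_deriv ?_
    have : 1 - t ≠ 0 := by linarith
    simp only [sub_sub_cancel, id]
    field_simp
    ring
  have hconst : ∀ᶠ t in 𝓝[>] 0, R t = R x := by
    filter_upwards [Ioo_mem_nhdsGT (zero_lt_one' ℝ)] with t ht
    exact isOpen_Ioo.is_const_of_deriv_eq_zero isPreconnected_Ioo
      (fun t ht => (hderiv t ht).differentiableAt.differentiableWithinAt)
      (fun t ht => (hderiv t ht).deriv) ht ⟨hx0, hx1⟩
  have hlim : Tendsto R (𝓝[>] 0) (𝓝 (π ^ 2 / 6)) := by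
    have h := (((Complex.continuous_re.tendsto _).comp tendsto_Li2C_ofReal_nhdsGT_zero).add
      ((Complex.continuous_re.tendsto _).comp tendsto_Li2C_one_sub_nhdsGT_zero)).add
      tendsto_log_mul_log_one_sub_nhdsGT_zero
    convert h using 2
    · rfl
    rw [← Complex.ofReal_pow, ← Complex.ofReal_ofNat, ← Complex.ofReal_div, Complex.ofReal_re,
      Complex.zero_re, zero_add, add_zero]
  exact tendsto_nhds_unique (tendsto_const_nhds.congr' (hconst.mono fun t ht => ht.symm)) hlim

theorem Li2C_half : Li2C (1 / 2) = ((π ^ 2 / 12 - Real.log 2 ^ 2 / 2 : ℝ) : ℂ) := by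
  have h := re_Li2C_add_re_Li2C_one_sub (x := 1 / 2) (by norm_num) (by norm_num)
  rw [show (1 : ℝ) - 1 / 2 = 1 / 2 by norm_num, one_div, Real.log_inv] at h
  have hcast : (1 / 2 : ℂ) = ((2⁻¹ : ℝ) : ℂ) := by push_cast; ring
  rw [hcast]
  apply Complex.ext
  · simp only [Complex.ofReal_re]
    linarith
  · simp only [Complex.ofReal_im, Li2C_ofReal_im]

noncomputable def Psi (u : ℂ) : ℂ :=
  (π : ℂ) ^ 2 / 6 - (Real.log 2 : ℂ) ^ 2 * u ^ 2 / 2 - Li2C ((2 : ℂ) ^ (-u))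

noncomputable def Psi' (u : ℂ) : ℂ :=
  -(Real.log 2 : ℂ) ^ 2 * u - (Real.log 2 : ℂ) * Complex.log (1 - (2 : ℂ) ^ (-u))

lemma Lam_eq (N : ℕ) (y : ℝ) : Lam N y = N * Psi (1 + y * I) := rfl

lemma ofReal_log_two : ((Real.log 2 : ℝ) : ℂ) = Complex.log 2 := by
  rw [Complex.ofReal_log zero_le_two, Complex.ofReal_ofNat]

lemma norm_two_cpow_neg_lt_one {u : ℂ} (hu : 0 < u.re) : ‖(2 : ℂ) ^ (-u)‖ < 1 := by
  rw [← Complex.ofReal_ofNat, Complex.norm_cpow_eq_rpow_re_of_pos two_pos, Complex.neg_re]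
  exact Real.rpow_lt_one_of_one_lt_of_neg one_lt_two (neg_neg_of_pos hu)

lemma one_sub_two_cpow_neg_mem_slitPlane {u : ℂ} (hu : 0 < u.re) :
    1 - (2 : ℂ) ^ (-u) ∈ slitPlane := by
  rw [sub_eq_add_neg]
  exact mem_slitPlane_of_norm_lt_one (by rw [norm_neg]; exact norm_two_cpow_neg_lt_one hu)

lemma hasDerivAt_two_cpow_neg (u : ℂ) :
    HasDerivAt (fun u : ℂ => (2 : ℂ) ^ (-u)) (-(Real.log 2 : ℂ) * 2 ^ (-u)) u := by
  refine ((hasDerivAt_neg u).const_cpow (Or.inl two_ne_zero)).congr_deriv ?_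
  rw [ofReal_log_two]
  ring

lemma hasDerivAt_Psi {u : ℂ} (hu : 0 < u.re) : HasDerivAt Psi (Psi' u) u := by
  have hw0 : (2 : ℂ) ^ (-u) ≠ 0 := by simp
  have hLi :=
    (hasDerivAt_Li2C (norm_two_cpow_neg_lt_one hu) hw0).comp u (hasDerivAt_two_cpow_neg u)
  have hsq := ((hasDerivAt_pow 2 u).const_mul ((Real.log 2 : ℂ) ^ 2)).div_const 2
  refine (((hasDerivAt_const u _).sub hsq).sub hLi).congr_deriv ?_
  rw [Psi']
  field_simp
  ring

lemma hasDerivAt_Psi'_one : HasDerivAt Psi' (-2 * (Real.log 2 : ℂ) ^ 2) 1 := by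
  have hlog := ((hasDerivAt_const (1 : ℂ) (1 : ℂ)).sub (hasDerivAt_two_cpow_neg 1)).clog
    (one_sub_two_cpow_neg_mem_slitPlane (by simp))
  have hlin := (hasDerivAt_id (1 : ℂ)).const_mul (-(Real.log 2 : ℂ) ^ 2)
  refine (hlin.sub (hlog.const_mul (Real.log 2 : ℂ))).congr_deriv ?_
  norm_num [Complex.cpow_neg_one]
  ring

lemma Psi_one : Psi 1 = ((π ^ 2 / 12 : ℝ) : ℂ) := by
  rw [Psi, Complex.cpow_neg_one, ← one_div, Li2C_half]
  push_cast
  ring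

lemma Psi'_one : Psi' 1 = 0 := by
  rw [Psi', Complex.cpow_neg_one, show (1 : ℂ) - 2⁻¹ = ((2⁻¹ : ℝ) : ℂ) by push_cast; norm_num,
    ← Complex.ofReal_log (by norm_num), Real.log_inv]
  push_cast
  ring

lemma Psi_conj (u : ℂ) : Psi (conj u) = conj (Psi u) := by
  have h2 : (2 : ℂ) ^ (-conj u) = conj ((2 : ℂ) ^ (-u)) := by
    rw [← map_neg, Complex.cpow_conj _ _ (by simpa using Real.pi_ne_zero.symm), map_ofNat]
  simp only [Psi, map_sub, map_div₀, map_mul, map_pow, map_ofNat, Complex.conj_ofReal, h2,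
    Li2C_conj]

noncomputable def Phi (u : ℂ) : ℂ := Psi u / u

noncomputable def Phi' (u : ℂ) : ℂ := Psi' u / u - Psi u / u ^ 2

lemma hasDerivAt_Phi {u : ℂ} (hu : 0 < u.re) : HasDerivAt Phi (Phi' u) u := by
  have hu0 := Complex.ne_zero_of_re_pos hu
  refine ((hasDerivAt_Psi hu).div (hasDerivAt_id u) hu0).congr_deriv ?_
  rw [Phi', id, mul_one]
  field_simp

lemma hasDerivAt_Phi'_one : HasDerivAt Phi' ((π ^ 2 / 6 - 2 * Real.log 2 ^ 2 : ℝ) : ℂ) 1 := by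
  have hPsi := hasDerivAt_Psi (u := 1) (by simp)
  refine ((hasDerivAt_Psi'_one.div (hasDerivAt_id 1) one_ne_zero).sub
    (hPsi.div (hasDerivAt_pow 2 1) (by norm_num))).congr_deriv ?_
  simp [Psi_one, Psi'_one]
  ring

theorem HasDerivAt.re_comp_add_ofReal_mul_I {H : ℂ → ℂ} {h' a : ℂ} {y : ℝ}
    (h : HasDerivAt H h' (a + y * I)) :
    HasDerivAt (fun t : ℝ => (H (a + t * I)).re) (h' * I).re y :=
  (h.comp (y : ℂ) (((hasDerivAt_id (y : ℂ)).mul_const I).const_add a)).congr_deriv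
    (by simp) |>.real_of_complex

lemma sfun_eq (N : ℕ) (y : ℝ) : sfun N y = N * (Phi (1 + y * I)).re - π ^ 2 * N / 12 := by
  rw [sfun, Lam_eq, mul_div_assoc, Phi, ← Complex.ofReal_natCast, Complex.re_ofReal_mul]

lemma hasDerivAt_sfun (N : ℕ) (y : ℝ) :
    HasDerivAt (sfun N) (N * (Phi' (1 + y * I) * I).re) y := by
  rw [funext (sfun_eq N)]
  exact ((hasDerivAt_Phi (by simp)).re_comp_add_ofReal_mul_I.const_mul (N : ℝ)).sub_const _

lemma sfun_zero (N : ℕ) : sfun N 0 = 0 := by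
  rw [sfun_eq, Complex.ofReal_zero, zero_mul, add_zero, Phi, div_one, Psi_one, Complex.ofReal_re]
  ring

lemma iteratedDeriv_two_sfun (N : ℕ) :
    iteratedDeriv 2 (sfun N) 0 = 2 * (N * (Real.log 2 ^ 2 - π ^ 2 / 12)) := by
  rw [iteratedDeriv_succ, iteratedDeriv_one, funext fun y => (hasDerivAt_sfun N y).deriv]
  have h : HasDerivAt (fun u => Phi' u * I) (((π ^ 2 / 6 - 2 * Real.log 2 ^ 2 : ℝ) : ℂ) * I)
      (1 + ((0 : ℝ) : ℂ) * I) := by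
    simpa using hasDerivAt_Phi'_one.mul_const I
  rw [(h.re_comp_add_ofReal_mul_I.const_mul (N : ℝ)).deriv, mul_assoc, Complex.I_mul_I,
    mul_neg_one, Complex.neg_re, Complex.ofReal_re]
  ring

lemma sfun_even (N : ℕ) : Function.Even (sfun N) := by
  intro y
  have hconj : 1 + ((-y : ℝ) : ℂ) * I = conj (1 + y * I) := by simp
  have hLam : Lam N (-y) = conj (Lam N y) := by
    rw [Lam_eq, Lam_eq, hconj, Psi_conj, map_mul, map_natCast]
  rw [sfun, sfun, hLam, hconj, ← map_div₀, Complex.conj_re]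

lemma analyticAt_sfun (N : ℕ) : AnalyticAt ℝ (sfun N) 0 := by
  have hU : IsOpen {u : ℂ | 0 < u.re} := isOpen_lt continuous_const Complex.continuous_re
  have hPhi : AnalyticAt ℂ Phi 1 :=
    DifferentiableOn.analyticAt
      (fun u hu => (hasDerivAt_Phi hu).differentiableAt.differentiableWithinAt)
      (hU.mem_nhds (by simp))
  have hline : AnalyticAt ℝ (fun t : ℝ => Phi (1 + t * I)) 0 := by
    refine hPhi.restrictScalars.comp_of_eq ?_ (by simp)
    exact analyticAt_const.add ((Complex.ofRealCLM.analyticAt 0).mul analyticAt_const)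
  rw [funext (sfun_eq N)]
  exact (analyticAt_const.mul ((Complex.reCLM.analyticAt _).comp hline)).sub analyticAt_const

theorem sfun_asymp_zero_general (N : ℕ) :
    (fun y : ℝ => sfun N y - N * ((Real.log 2) ^ 2 - π ^ 2 / 12) * y ^ 2) =O[nhds 0]
      (fun y : ℝ => y ^ 4) := by
  have h := (analyticAt_sfun N).isBigO_sub_quadratic_of_even (sfun_even N)
  rw [sfun_zero, iteratedDeriv_two_sfun] at h
  refine h.congr_left fun y => ?_
  rw [smul_eq_mul]
  ring

/-- As y → 0, s(y) = N(log(2)² - π²/12)y² + O(y⁴). -/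
theorem sfun_asymp_zero (N : ℕ) (hN : 0 < N) :
    (fun y : ℝ => sfun N y - N * ((Real.log 2) ^ 2 - π ^ 2 / 12) * y ^ 2) =O[nhds 0]
      (fun y : ℝ => y ^ 4) :=
  sfun_asymp_zero_general N
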